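/- Let (X,G,Φ) be a Cantor action and {U_ℓ} an adapted neighborhood basis at x ∈ X, with group chain G_ℓ, cores C_ℓ, inverse limit Ĝ_∞, and the map Θ̂ : G(Φ) → Ĝ_∞ determined by: Θ̂(f)_ℓ is the unique coset gC_ℓ with f(Φ(h)(U_ℓ)) = Φ(gh)(U_ℓ) for all h ∈ G. Then Θ̂ restricts to a bijection from the isotropy group {f ∈ G(Φ) : f(x) = x} onto the discriminant group D_x := {(g_ℓ C_ℓ)_ℓ ∈ Ĝ_∞ : for every ℓ the coset g_ℓ C_ℓ meets G_ℓ, i.e. g_ℓ can be chosen in G_ℓ}. -/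

import Mathlib

/-!
`Θ̂(f)_ℓ` records how `f` permutes the translates of `U_ℓ`, which partition `X`. By
equicontinuity these translates are uniformly small for large `ℓ`, so `Θ̂(f)` determines `f`.
If `f` fixes `x`, it maps `U_ℓ` onto the translate containing `x`, namely `U_ℓ` itself, so
`Θ̂(f)_ℓ` has a representative in `G_ℓ`. Conversely, for representatives `g_ℓ ∈ G_ℓ` of a
point of `D_x`, coherence `g_ℓ⁻¹ g_m ∈ C_ℓ` makes every `Φ(g_m)`, `m ≥ ℓ`, act on the
translates of `U_ℓ` as `g_ℓ` does; by equicontinuity the `Φ(g_m)` converge uniformly to some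
`f ∈ G(Φ)`, which maps each `U_ℓ` onto itself and therefore fixes `x`.
-/

open Set Topology Filter

section CantorActionDefs

variable {X : Type*} [MetricSpace X] {G : Type*} [Group G]

/-- `Φ : G → Homeo(X)` is a group homomorphism, i.e. an action of `G` on `X` by
homeomorphisms. -/
def IsActionHom (Φ : G → X ≃ₜ X) : Prop :=
  (∀ x : X, Φ 1 x = x) ∧ ∀ g h : G, ∀ x : X, Φ (g * h) x = Φ g (Φ h x)

/-- The action is minimal: every orbit is dense. -/
def IsMinimalAction (Φ : G → X ≃ₜ X) : Prop :=
  ∀ x : X, Dense (Set.range fun g : G => Φ g x)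

/-- The family `{Φ g : g ∈ G}` is equicontinuous with respect to the metric on `X`. -/
def IsEquicontinuousAction (Φ : G → X ≃ₜ X) : Prop :=
  ∀ ε : ℝ, 0 < ε → ∃ δ : ℝ, 0 < δ ∧
    ∀ g : G, ∀ x y : X, dist x y < δ → dist (Φ g x) (Φ g y) < ε

/-- A Cantor action: a minimal equicontinuous action by homeomorphisms. -/
def IsCantorAction (Φ : G → X ≃ₜ X) : Prop :=
  IsActionHom Φ ∧ IsMinimalAction Φ ∧ IsEquicontinuousAction Φ

/-- A clopen subset adapted to the action: nonempty, clopen, and any translate meeting it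
equals it. -/
def IsAdapted (Φ : G → X ≃ₜ X) (U : Set X) : Prop :=
  U.Nonempty ∧ IsClopen U ∧ ∀ g : G, (Φ g '' U ∩ U).Nonempty → Φ g '' U = U

/-- The Ellis (closure) group `G(Φ)`: the closure of `{Φ g : g ∈ G}` in `C(X,X)` with the
compact-open topology. -/
def actionClosure (Φ : G → X ≃ₜ X) : Set C(X, X) :=
  closure (Set.range fun g : G => (Φ g : C(X, X)))

/-- An adapted neighborhood basis at `x`: a properly descending chain of adapted clopen
sets starting at `X`, containing `x`, with intersection `{x}`. -/
def IsAdaptedBasis (Φ : G → X ≃ₜ X) (x : X) (U : ℕ → Set X) : Prop :=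
  U 0 = Set.univ ∧ (∀ ℓ : ℕ, IsAdapted Φ (U ℓ)) ∧ (∀ ℓ : ℕ, x ∈ U ℓ) ∧
    (∀ ℓ : ℕ, U (ℓ + 1) ⊂ U ℓ) ∧ (⋂ ℓ : ℕ, U ℓ) = ({x} : Set X)

/-- The stabilizer chain `K_ℓ`: elements of the Ellis group fixing `U ℓ` pointwise. -/
def stabChain (Φ : G → X ≃ₜ X) (U : ℕ → Set X) (ℓ : ℕ) : Set C(X, X) :=
  {f ∈ actionClosure Φ | ∀ z ∈ U ℓ, f z = z}

/-- The stabilizer chain is eventually constant (the action is stable along `U`). -/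
def IsStableChain (Φ : G → X ≃ₜ X) (U : ℕ → Set X) : Prop :=
  ∃ ℓ₀ : ℕ, ∀ ℓ : ℕ, ℓ₀ ≤ ℓ → stabChain Φ U ℓ = stabChain Φ U ℓ₀

/-- The action of the Ellis group is locally completely quasi-analytic. -/
def IsLCQA (Φ : G → X ≃ₜ X) : Prop :=
  ∃ ε : ℝ, 0 < ε ∧ ∀ U : Set X, IsAdapted Φ U → Metric.diam U < ε →
    ∀ V : Set X, IsAdapted Φ V → V ⊆ U →
      ∀ f₁ ∈ actionClosure Φ, ∀ f₂ ∈ actionClosure Φ,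
        (∀ z ∈ V, f₁ z = f₂ z) → ∀ z ∈ U, f₁ z = f₂ z

/-- `f` is a non-Hausdorff element of the Ellis group at `x`. -/
def IsNonHausdorffElem (Φ : G → X ≃ₜ X) (f : C(X, X)) (x : X) : Prop :=
  f ∈ actionClosure Φ ∧ f x = x ∧
    (∀ W : Set X, IsClopen W → x ∈ W → ¬ ∀ z ∈ W, f z = z) ∧
    ∃ (xs : ℕ → X) (W : ℕ → Set X), Filter.Tendsto xs Filter.atTop (nhds x) ∧
      ∀ i : ℕ, xs i ∈ W i ∧ IsClopen (W i) ∧ ⇑f '' W i = W i ∧ ∀ z ∈ W i, f z = z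

/-- The restrictions to an invariant set `U` of the maps `Φ g` with `Φ g (U) = U`,
as elements of `C(U,U)`. -/
def restrictedMaps (Φ : G → X ≃ₜ X) (U : Set X) : Set C(U, U) :=
  {u : C(U, U) | ∃ g : G, Φ g '' U = U ∧ ∀ z : U, (u z : X) = Φ g (z : X)}

/-- The stabilizer subgroup `G_U = {g : G | Φ g (U) = U}` of a set `U`. -/
def setStabilizer (Φ : G → X ≃ₜ X) (hΦ : IsActionHom Φ) (U : Set X) : Subgroup G where
  carrier := {g : G | Φ g '' U = U}
  one_mem' := by
    show ⇑(Φ 1) '' U = U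
    have h : ⇑(Φ 1) = id := funext hΦ.1
    rw [h, Set.image_id]
  mul_mem' := by
    intro a b ha hb
    show ⇑(Φ (a * b)) '' U = U
    have h : ⇑(Φ (a * b)) = ⇑(Φ a) ∘ ⇑(Φ b) := funext fun z => hΦ.2 a b z
    rw [h, Set.image_comp]
    rw [show ⇑(Φ b) '' U = U from hb, show ⇑(Φ a) '' U = U from ha]
  inv_mem' := by
    intro a ha
    show ⇑(Φ a⁻¹) '' U = U
    have hcomp : ⇑(Φ a⁻¹) ∘ ⇑(Φ a) = id := funext fun z => by
      show Φ a⁻¹ (Φ a z) = z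
      have h2 := hΦ.2 a⁻¹ a z
      rw [inv_mul_cancel] at h2
      rw [← h2]
      exact hΦ.1 z
    calc ⇑(Φ a⁻¹) '' U = ⇑(Φ a⁻¹) '' (⇑(Φ a) '' U) := by
            rw [show ⇑(Φ a) '' U = U from ha]
      _ = (⇑(Φ a⁻¹) ∘ ⇑(Φ a)) '' U := (Set.image_comp _ _ _).symm
      _ = U := by rw [hcomp, Set.image_id]

end CantorActionDefs

section ChainDefs

variable {G : Type*} [Group G]

/-- A group chain in `G`: descending subgroups starting at `G`, each of finite index in
the previous one. -/
def IsGroupChain (K : ℕ → Subgroup G) : Prop :=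
  K 0 = ⊤ ∧ ∀ ℓ : ℕ, K (ℓ + 1) ≤ K ℓ ∧ (K (ℓ + 1)).relIndex (K ℓ) ≠ 0

/-- The inverse limit `lim← G ⧸ C ℓ` of the coset spaces along a chain, as a subset of
the product. -/
def chainLimitSet (C : ℕ → Subgroup G) : Set (∀ ℓ : ℕ, G ⧸ C ℓ) :=
  {σ | ∀ ℓ : ℕ, ∃ g : G, σ ℓ = (g : G ⧸ C ℓ) ∧ σ (ℓ + 1) = (g : G ⧸ C (ℓ + 1))}

/-- The inverse limit topology on `lim← G ⧸ C ℓ`: the subspace topology from the product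
of the discrete coset spaces. -/
def chainLimitTop (C : ℕ → Subgroup G) : TopologicalSpace (chainLimitSet C) :=
  TopologicalSpace.induced Subtype.val
    (@Pi.topologicalSpace ℕ (fun ℓ => G ⧸ C ℓ) fun _ => ⊥)

/-- The basepoint `(e C_ℓ)_ℓ` of the inverse limit. -/
def chainBasepoint (C : ℕ → Subgroup G) : chainLimitSet C :=
  ⟨fun ℓ => ((1 : G) : G ⧸ C ℓ), fun _ => ⟨1, rfl, rfl⟩⟩

theorem smul_mem_chainLimitSet {C : ℕ → Subgroup G} (g : G) {σ : ∀ ℓ : ℕ, G ⧸ C ℓ}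
    (hσ : σ ∈ chainLimitSet C) : (fun ℓ => g • σ ℓ) ∈ chainLimitSet C := by
  intro ℓ
  obtain ⟨k, h1, h2⟩ := hσ ℓ
  refine ⟨g * k, ?_, ?_⟩
  · show g • σ ℓ = _
    rw [h1]; rfl
  · show g • σ (ℓ + 1) = _
    rw [h2]; rfl

/-- The conjugate subgroup `g H g⁻¹`. -/
def conjSubgroup (g : G) (H : Subgroup G) : Subgroup G :=
  H.map (MulAut.conj g).toMonoidHom

/-- Equivalence of group chains (interlacing). -/
def ChainsEquivalent (Gc Hc : ℕ → Subgroup G) : Prop :=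
  ∃ K : ℕ → Subgroup G, IsGroupChain K ∧
    ∃ ls js : ℕ → ℕ, StrictMono ls ∧ StrictMono js ∧
      ∀ k : ℕ, K (2 * k) = Gc (ls k) ∧ K (2 * k + 1) = Hc (js k)

/-- Conjugate equivalence of group chains. -/
def ChainsConjugateEquivalent (Gc Hc : ℕ → Subgroup G) : Prop :=
  ∃ gs : ℕ → G, (∀ ℓ : ℕ, (gs ℓ)⁻¹ * gs (ℓ + 1) ∈ Gc ℓ) ∧
    ChainsEquivalent (fun ℓ => conjSubgroup (gs ℓ) (Gc ℓ)) Hc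

end ChainDefs

section TwoSpaces

variable {X : Type*} [MetricSpace X] {X' : Type*} [MetricSpace X']
variable {G : Type*} [Group G] {G' : Type*} [Group G']

/-- A continuous orbit equivalence between two actions, implemented by a homeomorphism
`h : X → X'` with locally constant orbit transfer functions. -/
def IsContinuousOrbitEquivalence (Φ : G → X ≃ₜ X) (Ψ : G' → X' ≃ₜ X') (h : X ≃ₜ X') :
    Prop :=
  (∀ (x : X) (g : G), ∃ (k : G') (O : Set X), IsOpen O ∧ x ∈ O ∧
      ∀ z ∈ O, Ψ k (h z) = h (Φ g z)) ∧
    ∀ (y : X') (k : G'), ∃ (g : G) (O : Set X'), IsOpen O ∧ y ∈ O ∧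
      ∀ w ∈ O, Φ g (h.symm w) = h.symm (Ψ k w)

end TwoSpaces

theorem ContinuousMap.image_eq_of_tendsto {α β : Type*} [TopologicalSpace α] [CompactSpace α]
    [MetricSpace β] {F : ℕ → C(α, β)} {f : C(α, β)} (hF : Tendsto F atTop (𝓝 f))
    {K : Set α} (hK : IsCompact K) {W : Set β} (hW : IsClosed W)
    (hFW : ∀ᶠ m in atTop, F m '' K = W) : f '' K = W := by
  refine Subset.antisymm ?_ fun w hw => ?_
  · rintro _ ⟨z, hz, rfl⟩
    exact hW.mem_of_tendsto (((continuous_eval_const z).tendsto f).comp hF)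
      (hFW.mono fun m hm => hm ▸ mem_image_of_mem _ hz)
  · rw [← (hK.image f.continuous).isClosed.closure_eq, Metric.mem_closure_iff]
    intro ε hε
    obtain ⟨m, hm, hmε⟩ := (hFW.and (Metric.tendsto_nhds.mp hF ε hε)).exists
    obtain ⟨z, hz, rfl⟩ := hm ▸ hw
    exact ⟨f z, mem_image_of_mem f hz, (dist_apply_le_dist z).trans_lt hmε⟩

section CantorAction

variable {X : Type*} [MetricSpace X] {G : Type*} {Φ : G → X ≃ₜ X}

namespace IsAdaptedBasis

variable {x : X} {U : ℕ → Set X}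

theorem antitone (hU : IsAdaptedBasis Φ x U) : Antitone U :=
  antitone_nat_of_succ_le fun n => (hU.2.2.2.1 n).subset

theorem exists_subset_ball [CompactSpace X] (hU : IsAdaptedBasis Φ x U) {ε : ℝ} (hε : 0 < ε) :
    ∃ ℓ, U ℓ ⊆ Metric.ball x ε :=
  exists_subset_nhds_of_compactSpace hU.antitone.directed_ge (fun ℓ => (hU.2.1 ℓ).2.1.1)
    fun z hz => by
      rw [hU.2.2.2.2, mem_singleton_iff] at hz
      exact hz ▸ Metric.ball_mem_nhds x hε

theorem exists_forall_dist_image_lt [CompactSpace X] (hU : IsAdaptedBasis Φ x U)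
    (hequi : IsEquicontinuousAction Φ) {ε : ℝ} (hε : 0 < ε) :
    ∃ ℓ, ∀ k : G, ∀ u ∈ U ℓ, ∀ v ∈ U ℓ, dist (Φ k u) (Φ k v) < ε := by
  obtain ⟨δ, hδ, hδε⟩ := hequi ε hε
  obtain ⟨ℓ, hℓ⟩ := hU.exists_subset_ball (half_pos hδ)
  refine ⟨ℓ, fun k u hu v hv => hδε k u v ?_⟩
  calc dist u v ≤ dist u x + dist v x := dist_triangle_right u v x
    _ < δ / 2 + δ / 2 := add_lt_add (hℓ hu) (hℓ hv)
    _ = δ := add_halves δ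

end IsAdaptedBasis

variable [Group G]

namespace IsActionHom

theorem image_mul (hΦ : IsActionHom Φ) (g h : G) (S : Set X) :
    Φ (g * h) '' S = Φ g '' (Φ h '' S) := by
  rw [← image_comp]
  exact image_congr fun z _ => hΦ.2 g h z

theorem image_one (hΦ : IsActionHom Φ) (S : Set X) : Φ (1 : G) '' S = S := by
  rw [show ⇑(Φ 1) = id from funext hΦ.1, image_id]

theorem inv_apply_apply (hΦ : IsActionHom Φ) (g : G) (z : X) : Φ g⁻¹ (Φ g z) = z := by
  rw [← hΦ.2, inv_mul_cancel, hΦ.1]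

theorem image_eq_image_of_inv_mul_mem (hΦ : IsActionHom Φ) {V : Set X} {a b : G}
    (hab : a⁻¹ * b ∈ setStabilizer Φ hΦ V) : Φ b '' V = Φ a '' V := by
  rw [← mul_inv_cancel_left a b, hΦ.image_mul, show Φ (a⁻¹ * b) '' V = V from hab]

end IsActionHom

theorem IsAdapted.image_eq_image_of_nonempty_inter (hΦ : IsActionHom Φ) {V : Set X}
    (hV : IsAdapted Φ V) {a b : G} (hab : (Φ a '' V ∩ Φ b '' V).Nonempty) :
    Φ a '' V = Φ b '' V := by
  obtain ⟨_, ⟨u, hu, rfl⟩, v, hv, huv⟩ := hab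
  refine (hΦ.image_eq_image_of_inv_mul_mem (hV.2.2 _ ⟨u, ⟨v, hv, ?_⟩, hu⟩)).symm
  rw [hΦ.2, huv, hΦ.inv_apply_apply]

theorem IsAdapted.exists_mem_image (hΦ : IsActionHom Φ) (hmin : IsMinimalAction Φ)
    {V : Set X} (hV : IsAdapted Φ V) (z : X) : ∃ h : G, z ∈ Φ h '' V := by
  obtain ⟨_, ⟨g, rfl⟩, hgz⟩ := (hmin z).exists_mem_open hV.2.1.2 hV.1
  exact ⟨g⁻¹, Φ g z, hgz, hΦ.inv_apply_apply g z⟩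

/-- For `f ∈ G(Φ)` and `V = U ℓ` this is the condition characterising `Θ̂(f)_ℓ = g C_ℓ`. -/
def MapsTranslatesBy (Φ : G → X ≃ₜ X) (V : Set X) (f : X → X) (g : G) : Prop :=
  ∀ h : G, f '' (Φ h '' V) = Φ (g * h) '' V

namespace MapsTranslatesBy

variable {V : Set X} {f : X → X} {g : G}

theorem image_eq (hΦ : IsActionHom Φ) (hf : MapsTranslatesBy Φ V f g) :
    f '' V = Φ g '' V := by
  simpa only [hΦ.image_one, mul_one] using hf 1

theorem of_inv_mul_mem_normalCore (hΦ : IsActionHom Φ) {a b : G}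
    (hab : a⁻¹ * b ∈ (setStabilizer Φ hΦ V).normalCore) : MapsTranslatesBy Φ V (Φ b) a := by
  intro h
  rw [← hΦ.image_mul]
  refine hΦ.image_eq_image_of_inv_mul_mem ?_
  simpa only [mul_inv_rev, inv_inv, mul_assoc] using hab h⁻¹

theorem mem_setStabilizer (hΦ : IsActionHom Φ) (hV : IsAdapted Φ V) {x : X} (hx : x ∈ V)
    (hfx : f x = x) (hf : MapsTranslatesBy Φ V f g) : g ∈ setStabilizer Φ hΦ V := by
  refine hV.2.2 g ⟨x, ?_, hx⟩
  rw [← hf.image_eq hΦ, ← hfx]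
  exact mem_image_of_mem f hx

theorem of_subset (hΦ : IsActionHom Φ) (hV : IsAdapted Φ V) {W : Set X} (hWV : W ⊆ V)
    (hW : W.Nonempty) {g' : G} (hf' : MapsTranslatesBy Φ V f g')
    (hf : MapsTranslatesBy Φ W f g) : MapsTranslatesBy Φ V f g := by
  intro h
  rw [hf' h]
  obtain ⟨w, hw⟩ := hW
  refine hV.image_eq_image_of_nonempty_inter hΦ ⟨Φ (g * h) w, ?_, mem_image_of_mem _ (hWV hw)⟩
  rw [← hf' h]
  refine image_mono (image_mono hWV) ?_
  rw [hf h]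
  exact mem_image_of_mem _ hw

theorem of_tendsto [CompactSpace X] (hV : IsClosed V) {F : ℕ → C(X, X)} {f : C(X, X)}
    (hF : Tendsto F atTop (𝓝 f)) (hFg : ∀ᶠ m in atTop, MapsTranslatesBy Φ V (F m) g) :
    MapsTranslatesBy Φ V f g := fun h =>
  ContinuousMap.image_eq_of_tendsto hF (hV.isCompact.image (Φ h).continuous)
    ((Φ (g * h)).isClosedMap _ hV) (hFg.mono fun _ hm => hm h)

theorem dist_le [CompactSpace X] (hΦ : IsActionHom Φ) (hmin : IsMinimalAction Φ)
    (hV : IsAdapted Φ V) {ε : ℝ} (hsmall : ∀ k : G, ∀ u ∈ V, ∀ v ∈ V, dist (Φ k u) (Φ k v) < ε)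
    {f₁ f₂ : C(X, X)} (hf₁ : MapsTranslatesBy Φ V f₁ g) (hf₂ : MapsTranslatesBy Φ V f₂ g) :
    dist f₁ f₂ ≤ ε := by
  obtain ⟨u, hu⟩ := hV.1
  refine (ContinuousMap.dist_le (dist_nonneg.trans (hsmall 1 u hu u hu).le)).mpr fun z => ?_
  obtain ⟨h, hz⟩ := hV.exists_mem_image hΦ hmin z
  obtain ⟨u₁, hu₁, e₁⟩ : f₁ z ∈ Φ (g * h) '' V := hf₁ h ▸ mem_image_of_mem _ hz
  obtain ⟨u₂, hu₂, e₂⟩ : f₂ z ∈ Φ (g * h) '' V := hf₂ h ▸ mem_image_of_mem _ hz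
  rw [← e₁, ← e₂]
  exact (hsmall _ u₁ hu₁ u₂ hu₂).le

end MapsTranslatesBy

theorem inv_mul_mem_of_mem_chainLimitSet {C : ℕ → Subgroup G} (hC : Antitone C)
    {σ : ∀ ℓ : ℕ, G ⧸ C ℓ} (hσ : σ ∈ chainLimitSet C) {g : ℕ → G}
    (hg : ∀ ℓ, σ ℓ = (g ℓ : G ⧸ C ℓ)) {ℓ m : ℕ} (hℓm : ℓ ≤ m) : (g ℓ)⁻¹ * g m ∈ C ℓ := by
  induction m, hℓm using Nat.le_induction with
  | base => simp
  | succ m hℓm ih =>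
    obtain ⟨k, hk, hk'⟩ := hσ m
    have h₁ : (g m)⁻¹ * k ∈ C m := QuotientGroup.eq.mp ((hg m).symm.trans hk)
    have h₂ : (g (m + 1))⁻¹ * k ∈ C (m + 1) := QuotientGroup.eq.mp ((hg (m + 1)).symm.trans hk')
    have := (C ℓ).mul_mem ih <|
      (C ℓ).mul_mem (hC hℓm h₁) (hC (hℓm.trans m.le_succ) ((C (m + 1)).inv_mem h₂))
    simpa [mul_assoc] using this

namespace IsAdaptedBasis

variable {x : X} {U : ℕ → Set X}

theorem setStabilizer_antitone (hΦ : IsActionHom Φ) (hU : IsAdaptedBasis Φ x U) :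
    Antitone fun ℓ => setStabilizer Φ hΦ (U ℓ) := by
  intro ℓ m hℓm g hg
  obtain ⟨z, hz⟩ := (hU.2.1 m).1
  have hgz : Φ g z ∈ U m := (show Φ g '' U m = U m from hg) ▸ mem_image_of_mem _ hz
  exact (hU.2.1 ℓ).2.2 g ⟨Φ g z, mem_image_of_mem _ (hU.antitone hℓm hz), hU.antitone hℓm hgz⟩

theorem eq_of_forall_mapsTranslatesBy [CompactSpace X] (hΦ : IsCantorAction Φ)
    (hU : IsAdaptedBasis Φ x U) {f₁ f₂ : C(X, X)}
    (h : ∀ ℓ, ∃ g, MapsTranslatesBy Φ (U ℓ) f₁ g ∧ MapsTranslatesBy Φ (U ℓ) f₂ g) :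
    f₁ = f₂ := by
  refine eq_of_forall_dist_le fun ε hε => ?_
  obtain ⟨ℓ, hℓ⟩ := hU.exists_forall_dist_image_lt hΦ.2.2 hε
  obtain ⟨g, hg₁, hg₂⟩ := h ℓ
  exact hg₁.dist_le hΦ.1 hΦ.2.1 (hU.2.1 ℓ) hℓ hg₂

/-- The `Φ (g m)` form a uniformly Cauchy sequence by equicontinuity; its limit is the
required `f`. -/
theorem exists_fixed_mapsTranslatesBy [CompactSpace X] (hΦ : IsCantorAction Φ)
    (hU : IsAdaptedBasis Φ x U) {g : ℕ → G} (hg : ∀ ℓ, g ℓ ∈ setStabilizer Φ hΦ.1 (U ℓ))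
    (hcoh : ∀ ℓ m, ℓ ≤ m → (g ℓ)⁻¹ * g m ∈ (setStabilizer Φ hΦ.1 (U ℓ)).normalCore) :
    ∃ f ∈ actionClosure Φ, f x = x ∧ ∀ ℓ, MapsTranslatesBy Φ (U ℓ) f (g ℓ) := by
  set F : ℕ → C(X, X) := fun m => (Φ (g m) : C(X, X))
  have hF : ∀ ℓ m, ℓ ≤ m → MapsTranslatesBy Φ (U ℓ) (F m) (g ℓ) := fun ℓ m hℓm =>
    MapsTranslatesBy.of_inv_mul_mem_normalCore hΦ.1 (hcoh ℓ m hℓm)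
  have hcauchy : CauchySeq F := by
    refine Metric.cauchySeq_iff'.mpr fun ε hε => ?_
    obtain ⟨ℓ, hℓ⟩ := hU.exists_forall_dist_image_lt hΦ.2.2 (half_pos hε)
    exact ⟨ℓ, fun m hm => ((hF ℓ m hm).dist_le hΦ.1 hΦ.2.1 (hU.2.1 ℓ) hℓ
      (hF ℓ ℓ le_rfl)).trans_lt (half_lt_self hε)⟩
  obtain ⟨f, hf⟩ := cauchySeq_tendsto_of_complete hcauchy
  have hfg : ∀ ℓ, MapsTranslatesBy Φ (U ℓ) f (g ℓ) := fun ℓ =>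
    MapsTranslatesBy.of_tendsto (hU.2.1 ℓ).2.1.1 hf ((eventually_ge_atTop ℓ).mono (hF ℓ))
  refine ⟨f, mem_closure_of_tendsto hf (Eventually.of_forall fun m => ⟨g m, rfl⟩), ?_, hfg⟩
  have hfx : f x ∈ ⋂ ℓ, U ℓ := mem_iInter.mpr fun ℓ => by
    have hfU : f '' U ℓ = U ℓ := ((hfg ℓ).image_eq hΦ.1).trans (hg ℓ)
    exact hfU ▸ mem_image_of_mem f (hU.2.2.1 ℓ)
  rwa [hU.2.2.2.2, mem_singleton_iff] at hfx

end IsAdaptedBasis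

/-- The defining property of the map `Θ̂ : G(Φ) → Ĝ_∞`. -/
def IsTranslateCosetMap (hΦ : IsActionHom Φ) (U : ℕ → Set X)
    (Θ : C(X, X) → ∀ ℓ : ℕ, G ⧸ (setStabilizer Φ hΦ (U ℓ)).normalCore) : Prop :=
  ∀ f ∈ actionClosure Φ, ∀ ℓ : ℕ, ∀ g : G,
    (g : G ⧸ (setStabilizer Φ hΦ (U ℓ)).normalCore) = Θ f ℓ ↔ MapsTranslatesBy Φ (U ℓ) f g

namespace IsTranslateCosetMap

variable {x : X} {U : ℕ → Set X}

theorem exists_mapsTranslatesBy {hΦ : IsActionHom Φ}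
    {Θ : C(X, X) → ∀ ℓ : ℕ, G ⧸ (setStabilizer Φ hΦ (U ℓ)).normalCore}
    (hΘ : IsTranslateCosetMap hΦ U Θ) {f : C(X, X)} (hf : f ∈ actionClosure Φ) (ℓ : ℕ) :
    ∃ g : G, Θ f ℓ = g ∧ MapsTranslatesBy Φ (U ℓ) f g := by
  obtain ⟨g, hg⟩ := QuotientGroup.mk_surjective (Θ f ℓ)
  exact ⟨g, hg.symm, (hΘ f hf ℓ g).mp hg⟩

theorem mem_chainLimitSet {hΦ : IsActionHom Φ}
    {Θ : C(X, X) → ∀ ℓ : ℕ, G ⧸ (setStabilizer Φ hΦ (U ℓ)).normalCore}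
    (hΘ : IsTranslateCosetMap hΦ U Θ) (hU : IsAdaptedBasis Φ x U) {f : C(X, X)}
    (hf : f ∈ actionClosure Φ) :
    Θ f ∈ chainLimitSet fun ℓ => (setStabilizer Φ hΦ (U ℓ)).normalCore := by
  intro ℓ
  obtain ⟨g, hg, hfg⟩ := hΘ.exists_mapsTranslatesBy hf (ℓ + 1)
  obtain ⟨g', -, hfg'⟩ := hΘ.exists_mapsTranslatesBy hf ℓ
  refine ⟨g, ((hΘ f hf ℓ g).mpr ?_).symm, hg⟩
  exact hfg'.of_subset hΦ (hU.2.1 ℓ) (hU.2.2.2.1 ℓ).subset (hU.2.1 (ℓ + 1)).1 hfg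

theorem exists_mem_setStabilizer {hΦ : IsActionHom Φ}
    {Θ : C(X, X) → ∀ ℓ : ℕ, G ⧸ (setStabilizer Φ hΦ (U ℓ)).normalCore}
    (hΘ : IsTranslateCosetMap hΦ U Θ) (hU : IsAdaptedBasis Φ x U) {f : C(X, X)}
    (hf : f ∈ actionClosure Φ) (hfx : f x = x) (ℓ : ℕ) :
    ∃ g ∈ setStabilizer Φ hΦ (U ℓ), Θ f ℓ = (g : G ⧸ (setStabilizer Φ hΦ (U ℓ)).normalCore) := by
  obtain ⟨g, hg, hfg⟩ := hΘ.exists_mapsTranslatesBy hf ℓ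
  exact ⟨g, hfg.mem_setStabilizer hΦ (hU.2.1 ℓ) (hU.2.2.1 ℓ) hfx, hg⟩

theorem injOn [CompactSpace X] (hΦ : IsCantorAction Φ)
    {Θ : C(X, X) → ∀ ℓ : ℕ, G ⧸ (setStabilizer Φ hΦ.1 (U ℓ)).normalCore}
    (hΘ : IsTranslateCosetMap hΦ.1 U Θ) (hU : IsAdaptedBasis Φ x U) :
    InjOn Θ (actionClosure Φ) := by
  intro f₁ hf₁ f₂ hf₂ hΘf
  refine hU.eq_of_forall_mapsTranslatesBy hΦ fun ℓ => ?_
  obtain ⟨g, hg, hf₁g⟩ := hΘ.exists_mapsTranslatesBy hf₁ ℓ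
  exact ⟨g, hf₁g, (hΘ f₂ hf₂ ℓ g).mp (hg.symm.trans (congrFun hΘf ℓ))⟩

theorem exists_eq_of_mem_discriminant [CompactSpace X] (hΦ : IsCantorAction Φ)
    {Θ : C(X, X) → ∀ ℓ : ℕ, G ⧸ (setStabilizer Φ hΦ.1 (U ℓ)).normalCore}
    (hΘ : IsTranslateCosetMap hΦ.1 U Θ) (hU : IsAdaptedBasis Φ x U)
    {σ : ∀ ℓ : ℕ, G ⧸ (setStabilizer Φ hΦ.1 (U ℓ)).normalCore}
    (hσ : σ ∈ chainLimitSet fun ℓ => (setStabilizer Φ hΦ.1 (U ℓ)).normalCore)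
    (hσD : ∀ ℓ : ℕ, ∃ g ∈ setStabilizer Φ hΦ.1 (U ℓ),
      σ ℓ = (g : G ⧸ (setStabilizer Φ hΦ.1 (U ℓ)).normalCore)) :
    ∃ f ∈ actionClosure Φ, f x = x ∧ Θ f = σ := by
  choose g hg hσg using hσD
  have hC : Antitone fun ℓ => (setStabilizer Φ hΦ.1 (U ℓ)).normalCore := fun _ _ hℓm =>
    Subgroup.normalCore_mono (hU.setStabilizer_antitone hΦ.1 hℓm)
  obtain ⟨f, hf, hfx, hfg⟩ := hU.exists_fixed_mapsTranslatesBy hΦ hg fun _ _ hℓm =>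
    inv_mul_mem_of_mem_chainLimitSet hC hσ hσg hℓm
  exact ⟨f, hf, hfx, funext fun ℓ => ((hΘ f hf ℓ (g ℓ)).mpr (hfg ℓ)).symm.trans (hσg ℓ).symm⟩

end IsTranslateCosetMap

end CantorAction

theorem stmt7_general {X : Type*} [MetricSpace X] [CompactSpace X]
    {G : Type*} [Group G] (Φ : G → X ≃ₜ X) (hΦ : IsCantorAction Φ)
    (x : X) (U : ℕ → Set X) (hU : IsAdaptedBasis Φ x U)
    (Θ : C(X, X) → ∀ ℓ : ℕ, G ⧸ (setStabilizer Φ hΦ.1 (U ℓ)).normalCore)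
    (hΘ : ∀ f ∈ actionClosure Φ, ∀ ℓ : ℕ, ∀ g : G,
        (((g : G ⧸ (setStabilizer Φ hΦ.1 (U ℓ)).normalCore) = Θ f ℓ) ↔
          ∀ h : G, ⇑f '' (Φ h '' U ℓ) = Φ (g * h) '' U ℓ)) :
    Set.InjOn Θ {f ∈ actionClosure Φ | f x = x} ∧
    Θ '' {f ∈ actionClosure Φ | f x = x} =
      {σ ∈ chainLimitSet (fun ℓ => (setStabilizer Φ hΦ.1 (U ℓ)).normalCore) |
        ∀ ℓ : ℕ, ∃ g ∈ setStabilizer Φ hΦ.1 (U ℓ),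
          σ ℓ = (g : G ⧸ (setStabilizer Φ hΦ.1 (U ℓ)).normalCore)} := by
  have hΘ' : IsTranslateCosetMap hΦ.1 U Θ := hΘ
  refine ⟨(hΘ'.injOn hΦ hU).mono fun _ hf => hf.1, Subset.antisymm ?_ ?_⟩
  · rintro _ ⟨f, ⟨hf, hfx⟩, rfl⟩
    exact ⟨hΘ'.mem_chainLimitSet hU hf, hΘ'.exists_mem_setStabilizer hU hf hfx⟩
  · rintro σ ⟨hσ, hσD⟩
    obtain ⟨f, hf, hfx, rfl⟩ := hΘ'.exists_eq_of_mem_discriminant hΦ hU hσ hσD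
    exact ⟨f, ⟨hf, hfx⟩, rfl⟩

/-- The isomorphism `Θ̂` maps the isotropy group of `x` in the Ellis group
bijectively onto the discriminant group `D_x`. -/
theorem stmt7 {X : Type*} [MetricSpace X] [CompactSpace X] [TotallyDisconnectedSpace X]
    [Nonempty X] (hX : Perfect (Set.univ : Set X))
    {G : Type*} [Group G] [Countable G] (Φ : G → X ≃ₜ X) (hΦ : IsCantorAction Φ)
    (x : X) (U : ℕ → Set X) (hU : IsAdaptedBasis Φ x U)
    (Θ : C(X, X) → ∀ ℓ : ℕ, G ⧸ (setStabilizer Φ hΦ.1 (U ℓ)).normalCore)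
    (hΘ : ∀ f ∈ actionClosure Φ, ∀ ℓ : ℕ, ∀ g : G,
        (((g : G ⧸ (setStabilizer Φ hΦ.1 (U ℓ)).normalCore) = Θ f ℓ) ↔
          ∀ h : G, ⇑f '' (Φ h '' U ℓ) = Φ (g * h) '' U ℓ)) :
    Set.InjOn Θ {f ∈ actionClosure Φ | f x = x} ∧
    Θ '' {f ∈ actionClosure Φ | f x = x} =
      {σ ∈ chainLimitSet (fun ℓ => (setStabilizer Φ hΦ.1 (U ℓ)).normalCore) |
        ∀ ℓ : ℕ, ∃ g ∈ setStabilizer Φ hΦ.1 (U ℓ),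
          σ ℓ = (g : G ⧸ (setStabilizer Φ hΦ.1 (U ℓ)).normalCore)} :=
  stmt7_general Φ hΦ x U hU Θ hΘ
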